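/- arXiv:2602.21616 — 4 statements merged into one kernel-verified Lean document; each statement's English description precedes it below -/
import Mathlib

section
/- Let H be an infinite-dimensional separable complex Hilbert space and let (xₙ)ₙ∈ℕ be a sequence in H. If there exists a sequence of scalars (cₙ)ₙ∈ℕ such that (cₙ xₙ)ₙ∈ℕ is a frame for H, then (xₙ)ₙ∈ℕ is an unconditional Schauder frame for H. -/
open scoped ComplexInnerProductSpace

noncomputable section

/-- A family `f` in a Hilbert space is a frame. -/
def IsFrame {H : Type*} [NormedAddCommGroup H] [InnerProductSpace ℂ H]
    {ι : Type*} (f : ι → H) : Prop :=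
  ∃ A B : ℝ, 0 < A ∧ 0 < B ∧ ∀ x : H,
    A * ‖x‖ ^ 2 ≤ ∑' i, ‖⟪f i, x⟫‖ ^ 2 ∧ ∑' i, ‖⟪f i, x⟫‖ ^ 2 ≤ B * ‖x‖ ^ 2

/-- A family `f` in a Hilbert space is an unconditional Schauder frame. -/
def IsUnconditionalSchauderFrame {H : Type*} [NormedAddCommGroup H] [InnerProductSpace ℂ H]
    {ι : Type*} (f : ι → H) : Prop :=
  ∃ y : ι → H, ∀ x : H, HasSum (fun i => ⟪y i, x⟫ • f i) x

/-! The frame inequalities say that the analysis operator `T x = (⟪f i, x⟫)ᵢ` is a bounded map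
`H → ℓ²` which is bounded below. Its adjoint is the synthesis map `a ↦ ∑ aᵢ • f i`, so the frame
operator `S = T† T` sends `x` to `∑ ⟪f i, x⟫ • f i` and satisfies `⟪S x, x⟫ = ‖T x‖² ≥ A ‖x‖²`;
hence `S` is invertible, and expanding `x = S (S⁻¹ x)` exhibits the dual family `(S⁻¹)† (f i)`.
Rescaling `f i` by `c i` only rescales the dual family by `conj (c i)`. -/

open scoped InnerProductSpace InnerProduct lp
open ContinuousLinearMap

theorem lp.norm_sq_eq_tsum {ι : Type*} {E : ι → Type*} [∀ i, NormedAddCommGroup (E i)]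
    (a : lp E 2) : ‖a‖ ^ 2 = ∑' i, ‖a i‖ ^ 2 := by
  simpa using lp.norm_rpow_eq_tsum (p := 2) (by norm_num) a

theorem isUnit_adjoint_comp_self_of_bounded_below {𝕜 E F : Type*} [RCLike 𝕜]
    [NormedAddCommGroup E] [InnerProductSpace 𝕜 E] [CompleteSpace E]
    [NormedAddCommGroup F] [InnerProductSpace 𝕜 F] [CompleteSpace F]
    {T : E →L[𝕜] F} {A : ℝ} (hA : 0 < A) (hT : ∀ x, A * ‖x‖ ^ 2 ≤ ‖T x‖ ^ 2) :
    IsUnit (T† ∘L T) :=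
  isUnit_of_forall_le_norm_inner_map _ (c := ⟨A, hA.le⟩) hA fun x => calc
    ‖x‖ ^ 2 * A = A * ‖x‖ ^ 2 := mul_comm _ _
    _ ≤ ‖T x‖ ^ 2 := hT x
    _ = ‖⟪(T† ∘L T) x, x⟫_𝕜‖ := by
      rw [comp_apply, adjoint_inner_left, inner_self_eq_norm_sq_to_K, ← RCLike.ofReal_pow,
        RCLike.norm_ofReal, abs_sq]

section Frame

variable {𝕜 H ι : Type*} [RCLike 𝕜] [NormedAddCommGroup H] [InnerProductSpace 𝕜 H] {f : ι → H}

theorem exists_analysisOperator {B : ℝ} (hsum : ∀ x, Summable fun i => ‖⟪f i, x⟫_𝕜‖ ^ 2)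
    (hub : ∀ x, ∑' i, ‖⟪f i, x⟫_𝕜‖ ^ 2 ≤ B * ‖x‖ ^ 2) :
    ∃ T : H →L[𝕜] ℓ²(ι, 𝕜), ∀ x i, T x i = ⟪f i, x⟫_𝕜 := by
  let T : H →ₗ[𝕜] ℓ²(ι, 𝕜) :=
    { toFun x := ⟨_, memℓp_gen (by simpa using hsum x)⟩
      map_add' x y := by ext i; exact inner_add_right _ _ _
      map_smul' c x := by ext i; exact inner_smul_right _ _ _ }
  refine ⟨T.mkContinuous √B fun x => ?_, fun x i => rfl⟩
  calc ‖T x‖ = √(∑' i, ‖⟪f i, x⟫_𝕜‖ ^ 2) := by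
        rw [← Real.sqrt_sq (norm_nonneg (T x)), lp.norm_sq_eq_tsum]; rfl
    _ ≤ √(B * ‖x‖ ^ 2) := Real.sqrt_le_sqrt (hub x)
    _ = √B * ‖x‖ := by rw [Real.sqrt_mul' _ (sq_nonneg _), Real.sqrt_sq (norm_nonneg _)]

/-- `∑'` is `0` on non-summable families, so it is the lower frame bound that forces summability. -/
theorem summable_norm_inner_sq_of_lower_bound {A : ℝ} (hA : 0 < A)
    (hlb : ∀ x, A * ‖x‖ ^ 2 ≤ ∑' i, ‖⟪f i, x⟫_𝕜‖ ^ 2) (x : H) :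
    Summable fun i => ‖⟪f i, x⟫_𝕜‖ ^ 2 := by
  rcases eq_or_ne x 0 with rfl | hx
  · simp
  by_contra h
  have := tsum_eq_zero_of_not_summable h ▸ hlb x
  have : 0 < A * ‖x‖ ^ 2 := by positivity
  linarith

variable [CompleteSpace H]

theorem adjoint_single_one_of_apply_eq_inner [DecidableEq ι] {T : H →L[𝕜] ℓ²(ι, 𝕜)}
    (hT : ∀ x i, T x i = ⟪f i, x⟫_𝕜) (i : ι) : (T†) (lp.single 2 i 1) = f i :=
  ext_inner_right 𝕜 fun x => by simp [adjoint_inner_left, lp.inner_single_left, hT]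

theorem hasSum_smul_adjoint_of_apply_eq_inner {T : H →L[𝕜] ℓ²(ι, 𝕜)}
    (hT : ∀ x i, T x i = ⟪f i, x⟫_𝕜) (a : ℓ²(ι, 𝕜)) :
    HasSum (fun i => a i • f i) ((T†) a) := by
  classical
  have hsingle (i : ι) : (T†) (lp.single 2 i (a i)) = a i • f i := by
    rw [← adjoint_single_one_of_apply_eq_inner hT, ← map_smul, ← lp.single_smul, smul_eq_mul,
      mul_one]
  simpa only [hsingle] using (lp.hasSum_single (by norm_num) a).mapL (T†)

theorem exists_hasSum_inner_smul_of_frame_bounds {A B : ℝ} (hA : 0 < A)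
    (hlb : ∀ x, A * ‖x‖ ^ 2 ≤ ∑' i, ‖⟪f i, x⟫_𝕜‖ ^ 2)
    (hub : ∀ x, ∑' i, ‖⟪f i, x⟫_𝕜‖ ^ 2 ≤ B * ‖x‖ ^ 2) :
    ∃ y : ι → H, ∀ x, HasSum (fun i => ⟪y i, x⟫_𝕜 • f i) x := by
  obtain ⟨T, hT⟩ := exists_analysisOperator (summable_norm_inner_sq_of_lower_bound hA hlb) hub
  have hnorm (x : H) : ‖T x‖ ^ 2 = ∑' i, ‖⟪f i, x⟫_𝕜‖ ^ 2 := by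
    simp only [lp.norm_sq_eq_tsum, hT]
  obtain ⟨S, hS⟩ :=
    isUnit_adjoint_comp_self_of_bounded_below hA fun x => (hlb x).trans (hnorm x).ge
  let R : H →L[𝕜] H := ↑S⁻¹
  have hR (x : H) : (T†) (T (R x)) = x := by
    rw [← comp_apply, ← hS, ← mul_apply_eq_comp, S.mul_inv, one_apply_eq_self]
  refine ⟨fun i => (R†) (f i), fun x => ?_⟩
  simpa [adjoint_inner_left, hT, hR] using hasSum_smul_adjoint_of_apply_eq_inner hT (T (R x))

end Frame

theorem IsFrame.isUnconditionalSchauderFrame {H ι : Type*} [NormedAddCommGroup H]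
    [InnerProductSpace ℂ H] [CompleteSpace H] {f : ι → H} (hf : IsFrame f) :
    IsUnconditionalSchauderFrame f := by
  obtain ⟨A, B, hA, -, hAB⟩ := hf
  exact exists_hasSum_inner_smul_of_frame_bounds hA (fun x => (hAB x).1) fun x => (hAB x).2

theorem IsUnconditionalSchauderFrame.of_smul {H ι : Type*} [NormedAddCommGroup H]
    [InnerProductSpace ℂ H] {f : ι → H} {c : ι → ℂ}
    (h : IsUnconditionalSchauderFrame fun i => c i • f i) : IsUnconditionalSchauderFrame f := by
  obtain ⟨y, hy⟩ := h
  refine ⟨fun i => starRingEnd ℂ (c i) • y i, fun x => ?_⟩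
  simpa [inner_smul_left, smul_smul, mul_comm] using hy x

theorem stmt6_general (H : Type*) [NormedAddCommGroup H] [InnerProductSpace ℂ H]
    [CompleteSpace H]
    (x : ℕ → H) (c : ℕ → ℂ) (hc : IsFrame (fun n => c n • x n)) :
    IsUnconditionalSchauderFrame x :=
  hc.isUnconditionalSchauderFrame.of_smul

/-- If some rescaling  of  is a frame, then  is an unconditional
Schauder frame. -/
theorem stmt6 (H : Type*) [NormedAddCommGroup H] [InnerProductSpace ℂ H]
    [CompleteSpace H] [TopologicalSpace.SeparableSpace H]
    (hinf : ¬ FiniteDimensional ℂ H)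
    (x : ℕ → H) (c : ℕ → ℂ) (hc : IsFrame (fun n => c n • x n)) :
    IsUnconditionalSchauderFrame x :=
  stmt6_general H x c hc
end
end

section
/- Let H be an infinite-dimensional separable complex Hilbert space, let (xₙ)ₙ≥1 be a frame for H, and let (yₙ)ₙ≥1 be a sequence in H with M := supₙ ‖yₙ‖ < ∞ such that x = Σₙ ⟨x, yₙ⟩ xₙ with unconditional convergence for every x ∈ H. Let (Kₙ)ₙ≥1 be positive integers, and for each n ≥ 1 let z_{n,1}, …, z_{n,Kₙ} ∈ H satisfy ‖z_{n,i} − xₙ‖ ≤ (2^{2n} M)^{−1} for all 1 ≤ i ≤ Kₙ. Then the map S : H → H defined by S(x) = Σₙ Σ_{i=1}^{Kₙ} ⟨x, Kₙ^{−1} yₙ⟩ z_{n,i} is a well-defined bounded linear operator (the series converging unconditionally in norm for every x) satisfying ‖S − Id‖ < 1, hence S is invertible; consequently the doubly-indexed family (z_{n,i})_{n≥1, 1≤i≤Kₙ} is an unconditional Schauder frame for H, with coefficient functionals ((S^{−1})* (Kₙ^{−1} yₙ))_{n≥1, 1≤i≤Kₙ}. -/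
/-!
Write `z_{n,i} = x_n + (z_{n,i} - x_n)`. Splitting the `n`-th term of the reconstruction
`v = Σ ⟪y_n, v⟫ x_n` into `K_n` equal pieces keeps it unconditionally convergent, since every
finite partial sum of the split series is a convex combination of finite partial sums of the
original one. The remaining part is a series of rank-one operators converging absolutely in
operator norm, with total norm at most `Σ 4^{-(n+1)} = 1/3`. Hence `‖S - 1‖ ≤ 1/3`, `S` is
invertible by the Neumann series, and expanding `S (S⁻¹ v)` gives the Schauder frame.
-/

open scoped ComplexInnerProductSpace

noncomputable section

section WeightedSigma

open scoped Pointwise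

variable {E : Type*} [NormedAddCommGroup E] [NormedSpace ℝ E]

theorem Finset.sum_smul_mem_of_forall_subset_sum_mem {ι : Type*} {s : Finset ι} {a : ι → E}
    {c : ι → ℝ} {U : Set E} (hU : Convex ℝ U) (hsub : ∀ A ⊆ s, ∑ i ∈ A, a i ∈ U)
    (hc : ∀ i ∈ s, c i ∈ Set.Icc 0 1) : ∑ i ∈ s, c i • a i ∈ U := by
  classical
  have hvertices : ∑ i ∈ s, ({0, a i} : Set E) ⊆ U := by
    intro _ hv
    obtain ⟨g, hg, rfl⟩ := (Set.mem_finsetSum _ _ _).1 hv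
    have hg_sum : ∑ i ∈ s, g i = ∑ i ∈ s.filter (fun i => g i = a i), a i := by
      rw [Finset.sum_filter]
      refine Finset.sum_congr rfl fun i hi => ?_
      rcases hg hi with h | h <;> split_ifs <;> simp_all
    rw [hg_sum]
    exact hsub _ (Finset.filter_subset _ _)
  refine convexHull_min hvertices hU ?_
  rw [convexHull_sum]
  refine Set.finsetSum_mem_finsetSum _ _ _ fun i hi => ?_
  rw [convexHull_pair, segment_eq_image']
  exact ⟨c i, hc i hi, by simp⟩

variable [CompleteSpace E] {ι : Type*} {β : ι → Type*} [∀ i, Fintype (β i)]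
  {w : (Σ i, β i) → ℝ} {a : ι → E}

theorem Summable.sigma_weighted_smul (hw0 : ∀ p, 0 ≤ w p) (hw1 : ∀ i, ∑ j, w ⟨i, j⟩ = 1)
    (ha : Summable a) : Summable fun p => w p • a p.1 := by
  classical
  rw [summable_iff_vanishing]
  intro e he
  obtain ⟨ε, hε, hball⟩ := Metric.mem_nhds_iff.mp he
  obtain ⟨s, hs⟩ := summable_iff_vanishing.mp ha _ (Metric.ball_mem_nhds 0 hε)
  refine ⟨s.sigma fun _ => Finset.univ, fun t ht => hball ?_⟩
  set T := t.image Sigma.fst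
  have hfiber : ∑ p ∈ t, w p • a p.1
      = ∑ i ∈ T, (∑ j, if (⟨i, j⟩ : Σ i, β i) ∈ t then w ⟨i, j⟩ else 0) • a i := by
    have ht : T.sigma (fun _ => Finset.univ) ∩ t = t := Finset.inter_eq_right.2 fun p hp =>
      Finset.mem_sigma.2 ⟨Finset.mem_image_of_mem _ hp, Finset.mem_univ _⟩
    conv_lhs => rw [← ht, ← Finset.sum_ite_mem, Finset.sum_sigma]
    simp_rw [Finset.sum_smul, ite_smul, zero_smul]
  rw [hfiber]
  refine Finset.sum_smul_mem_of_forall_subset_sum_mem (convex_ball 0 ε)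
    (fun A hA => hs A ?_) fun i _ => ⟨?_, ?_⟩
  · refine Finset.disjoint_left.2 fun i hiA his => ?_
    obtain ⟨p, hpt, rfl⟩ := Finset.mem_image.1 (hA hiA)
    exact Finset.disjoint_left.1 ht hpt (by simpa using his)
  · exact Finset.sum_nonneg fun j _ => by split_ifs <;> simp [hw0]
  · calc _ ≤ ∑ j, w ⟨i, j⟩ := Finset.sum_le_sum fun j _ => by split_ifs <;> simp [hw0]
      _ = 1 := hw1 i

theorem HasSum.sigma_weighted_smul {v : E} (hw0 : ∀ p, 0 ≤ w p)
    (hw1 : ∀ i, ∑ j, w ⟨i, j⟩ = 1) (ha : HasSum a v) : HasSum (fun p => w p • a p.1) v := by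
  refine ha.sigma_of_hasSum (fun i => ?_) (ha.summable.sigma_weighted_smul hw0 hw1)
  simpa [← Finset.sum_smul, hw1 i] using hasSum_fintype fun j : β i => w ⟨i, j⟩ • a i

theorem HasSum.sigma_inv_smul {K : ι → ℕ} (hK : ∀ i, 0 < K i) {v : E} (ha : HasSum a v) :
    HasSum (fun p : Σ i, Fin (K i) => (K p.1 : ℝ)⁻¹ • a p.1) v :=
  ha.sigma_weighted_smul (fun _ => by positivity) fun i => by simp [(hK i).ne']

end WeightedSigma

theorem ContinuousLinearMap.exists_equiv_of_norm_sub_one_lt {𝕜 E : Type*}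
    [NontriviallyNormedField 𝕜] [NormedAddCommGroup E] [NormedSpace 𝕜 E] [CompleteSpace E]
    (A : E →L[𝕜] E) (hA : ‖A - 1‖ < 1) : ∃ S : E ≃L[𝕜] E, (S : E →L[𝕜] E) = A :=
  ⟨.ofUnit (Units.oneSub (1 - A) (by rwa [norm_sub_rev])), sub_sub_cancel 1 A⟩

theorem hasSum_inner_adjoint_symm_smul {𝕜 H ι : Type*} [RCLike 𝕜] [NormedAddCommGroup H]
    [InnerProductSpace 𝕜 H] [CompleteSpace H] (S : H ≃L[𝕜] H) {w z : ι → H}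
    (hS : ∀ v, HasSum (fun p => inner 𝕜 (w p) v • z p) (S v)) (v : H) :
    HasSum (fun p => inner 𝕜 ((S.symm : H →L[𝕜] H).adjoint (w p)) v • z p) v := by
  simpa [ContinuousLinearMap.adjoint_inner_left] using hS (S.symm v)

theorem mul_le_inv_of_le_of_le_inv_mul {a b c M : ℝ} (ha : 0 ≤ a) (hb : 0 ≤ b) (hc : 0 < c)
    (haM : a ≤ M) (hbM : b ≤ (c * M)⁻¹) : a * b ≤ c⁻¹ := by
  rcases (ha.trans haM).eq_or_lt with rfl | hM
  · simp [le_antisymm haM ha, hc.le]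
  · calc a * b ≤ M * (c * M)⁻¹ := mul_le_mul haM hbM hb hM.le
      _ = c⁻¹ := by field_simp

theorem hasSum_sigma_inv_mul_inv_four_pow {K : ℕ → ℕ} (hK : ∀ n, 0 < K n) :
    HasSum (fun p : Σ n, Fin (K n) => (K p.1 : ℝ)⁻¹ * ((2 : ℝ) ^ (2 * (p.1 + 1)))⁻¹) (1 / 3) := by
  have hgeom : HasSum (fun n : ℕ => ((2 : ℝ) ^ (2 * (n + 1)))⁻¹) (1 / 3) := by
    have h := (hasSum_geometric_of_lt_one (r := (4 : ℝ)⁻¹) (by norm_num) (by norm_num)).mul_left 4⁻¹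
    rw [show (4 : ℝ)⁻¹ * (1 - 4⁻¹)⁻¹ = 1 / 3 by norm_num] at h
    refine h.congr_fun fun n => ?_
    rw [pow_mul, ← inv_pow, ← pow_succ']
    norm_num
  simpa only [smul_eq_mul] using hgeom.sigma_inv_smul hK

theorem stmt10_general (H : Type*) [NormedAddCommGroup H] [InnerProductSpace ℂ H]
    [CompleteSpace H]
    (x : ℕ → H)
    (y : ℕ → H) (hbd : BddAbove (Set.range fun n => ‖y n‖))
    (M : ℝ) (hM : M = ⨆ n, ‖y n‖)
    (hrec : ∀ v : H, HasSum (fun n => ⟪y n, v⟫ • x n) v)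
    (K : ℕ → ℕ) (hK : ∀ n, 0 < K n)
    (z : (n : ℕ) → Fin (K n) → H)
    (hz : ∀ (n : ℕ) (i : Fin (K n)), ‖z n i - x n‖ ≤ ((2 : ℝ) ^ (2 * (n + 1)) * M)⁻¹) :
    ∃ S : H ≃L[ℂ] H,
      (∀ v : H, HasSum
        (fun p : Σ n : ℕ, Fin (K n) =>
          (((K p.1 : ℂ))⁻¹ * ⟪y p.1, v⟫) • z p.1 p.2) ((S : H →L[ℂ] H) v)) ∧
      ‖(S : H →L[ℂ] H) - 1‖ < 1 ∧
      ∀ v : H, HasSum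
        (fun p : Σ n : ℕ, Fin (K n) =>
          ⟪ContinuousLinearMap.adjoint ((S.symm : H ≃L[ℂ] H) : H →L[ℂ] H)
              (((K p.1 : ℂ))⁻¹ • y p.1), v⟫ • z p.1 p.2) v := by
  set w : (Σ n, Fin (K n)) → H := fun p => ((K p.1 : ℂ))⁻¹ • y p.1
  have hw : ∀ p v, ⟪w p, v⟫ = (K p.1 : ℂ)⁻¹ * ⟪y p.1, v⟫ := fun p v => by simp [w, mul_comm]
  set T : (Σ n, Fin (K n)) → H →L[ℂ] H := fun p => (innerSL ℂ (w p)).smulRight (z p.1 p.2 - x p.1)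
  have hT : ∀ p, ‖T p‖ ≤ (K p.1 : ℝ)⁻¹ * ((2 : ℝ) ^ (2 * (p.1 + 1)))⁻¹ := fun ⟨n, i⟩ => by
    simp only [T, w, ContinuousLinearMap.norm_smulRight_apply, innerSL_apply_norm, norm_smul,
      norm_inv, Complex.norm_natCast, mul_assoc]
    exact mul_le_mul_of_nonneg_left (mul_le_inv_of_le_of_le_inv_mul (norm_nonneg _)
      (norm_nonneg _) (by positivity) (hM ▸ le_ciSup hbd n) (hz n i)) (by positivity)
  have hTsum : Summable T := .of_norm_bounded (hasSum_sigma_inv_mul_inv_four_pow hK).summable hT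
  have hTnorm : ‖∑' p, T p‖ < 1 := by
    linarith [tsum_of_norm_bounded (hasSum_sigma_inv_mul_inv_four_pow hK) hT]
  obtain ⟨S, hS⟩ := (1 + ∑' p, T p).exists_equiv_of_norm_sub_one_lt (by rwa [add_sub_cancel_left])
  have hsynth : ∀ v, HasSum (fun p => ⟪w p, v⟫ • z p.1 p.2) ((S : H →L[ℂ] H) v) := fun v => by
    have hxpart : HasSum (fun p : Σ n, Fin (K n) => ⟪w p, v⟫ • x p.1) v := by
      simpa [hw, mul_smul, ← Complex.coe_smul] using (hrec v).sigma_inv_smul hK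
    have hTpart := (ContinuousLinearMap.apply ℂ H v).hasSum hTsum.hasSum
    rw [hS]
    convert hxpart.add hTpart using 1
    · ext p; simp [T, ← smul_add]
    · simp
  exact ⟨S, fun v => by simpa only [hw] using hsynth v, by rwa [hS, add_sub_cancel_left],
    hasSum_inner_adjoint_symm_smul S hsynth⟩

/-- Perturbation of a frame reconstruction by duplicated nearby vectors.
Here `x n`, `y n`, `z n i` stand for the paper's `x_{n+1}`, `y_{n+1}`, `z_{n+1,i}`
(so indices run over `n ≥ 1`).  If `(xₙ)` is a frame, `M = supₙ ‖yₙ‖ < ∞`, the `yₙ` give an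
unconditional reconstruction, and each `z_{n,i}` (`1 ≤ i ≤ Kₙ`) satisfies
`‖z_{n,i} − xₙ‖ ≤ (2^{2n} M)⁻¹`, then `S x = Σₙ Σᵢ ⟪Kₙ⁻¹ yₙ, x⟫ z_{n,i}` is a well-defined
bounded operator with `‖S − Id‖ < 1`, hence invertible, and `(z_{n,i})` is an unconditional
Schauder frame with (nonzero) coefficient functionals `(S⁻¹)* (Kₙ⁻¹ yₙ)`. -/
theorem stmt10 (H : Type*) [NormedAddCommGroup H] [InnerProductSpace ℂ H]
    [CompleteSpace H] [TopologicalSpace.SeparableSpace H]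
    (hinf : ¬ FiniteDimensional ℂ H)
    (x : ℕ → H) (hx : IsFrame x)
    (y : ℕ → H) (hbd : BddAbove (Set.range fun n => ‖y n‖))
    (M : ℝ) (hM : M = ⨆ n, ‖y n‖)
    (hrec : ∀ v : H, HasSum (fun n => ⟪y n, v⟫ • x n) v)
    (K : ℕ → ℕ) (hK : ∀ n, 0 < K n)
    (z : (n : ℕ) → Fin (K n) → H)
    (hz : ∀ (n : ℕ) (i : Fin (K n)), ‖z n i - x n‖ ≤ ((2 : ℝ) ^ (2 * (n + 1)) * M)⁻¹) :
    ∃ S : H ≃L[ℂ] H,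
      (∀ v : H, HasSum
        (fun p : Σ n : ℕ, Fin (K n) =>
          (((K p.1 : ℂ))⁻¹ * ⟪y p.1, v⟫) • z p.1 p.2) ((S : H →L[ℂ] H) v)) ∧
      ‖(S : H →L[ℂ] H) - 1‖ < 1 ∧
      ∀ v : H, HasSum
        (fun p : Σ n : ℕ, Fin (K n) =>
          ⟪ContinuousLinearMap.adjoint ((S.symm : H ≃L[ℂ] H) : H →L[ℂ] H)
              (((K p.1 : ℂ))⁻¹ • y p.1), v⟫ • z p.1 p.2) v :=
  stmt10_general H x y hbd M hM hrec K hK z hz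
end
end

section
/- Let φ ∈ L²(ℝ^d) and let Γ ⊆ ℝ^{2d} be a countable set such that the Gabor system {M_b T_a φ : (a,b) ∈ Γ} is a frame for L²(ℝ^d). Then there exist a countable set Λ ⊆ ℝ^{2d} with upper Beurling density D⁺(Λ) = ∞ and a family (g_λ)_{λ∈Λ} of nonzero functions in L²(ℝ^d) such that every f ∈ L²(ℝ^d) satisfies f = Σ_{(a,b)∈Λ} ⟨f, g_{(a,b)}⟩ M_b T_a φ with unconditional convergence in L²(ℝ^d); i.e., {M_b T_a φ : (a,b) ∈ Λ} is an unconditional Schauder frame for L²(ℝ^d) whose coefficient functionals are all nonzero. -/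
open MeasureTheory Complex
open scoped ComplexInnerProductSpace ENNReal BigOperators

noncomputable section

abbrev Euc (d : ℕ) := EuclideanSpace ℝ (Fin d)

/-- Number of elements of a set, valued in `ℝ≥0∞` (equal to `∞` for infinite sets). -/
def setCount {α : Type*} (s : Set α) : ℝ≥0∞ := ∑' _ : s, (1 : ℝ≥0∞)

/-- Euclidean ball of radius `r` around `z` in the time-frequency plane `ℝ^d × ℝ^d ≅ ℝ^{2d}`. -/
def ball2 {d : ℕ} (z : Euc d × Euc d) (r : ℝ) : Set (Euc d × Euc d) :=
  {q | Real.sqrt (dist q.1 z.1 ^ 2 + dist q.2 z.2 ^ 2) < r}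

/-- Upper Beurling density of `Λ ⊆ ℝ^{2d}`:
`limsup_{r→∞} sup_z #(Λ ∩ B_r(z)) / |B_r(z)|`. -/
def upperBeurlingDensity2d {d : ℕ} (Λ : Set (Euc d × Euc d)) : ℝ≥0∞ :=
  Filter.limsup (fun r : ℝ =>
    ⨆ z : Euc d × Euc d, setCount (Λ ∩ ball2 z r) / volume (ball2 z r)) Filter.atTop

/-- The modulation-translation `M_b T_a φ` of a function `φ : ℝ^d → ℂ`. -/
def modTrans {d : ℕ} (φ : Euc d → ℂ) (a b : Euc d) : Euc d → ℂ :=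
  fun x => Complex.exp (2 * Real.pi * Complex.I * ((inner ℝ b x : ℝ) : ℂ)) * φ (x - a)

/-!
The canonical dual `(S⁻¹ F_γ)` of the frame `F_γ = M_b T_a φ` gives an unconditional expansion
`f = ∑_Γ ⟪S⁻¹ F_γ, f⟫ F_γ` with nonzero coefficient vectors. Adjoin a countably infinite set `R`
of points of the unit ball avoiding `Γ`; this alone makes the upper Beurling density infinite.
Choose positive weights `c` with `v = ∑_R c_λ F_λ` convergent and a vector `h ≠ 0` with
`‖v‖ ‖h‖ < 1`. With coefficient vectors `c_λ h` on `R` the new atoms contribute `⟪h, f⟫ v`, which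
is cancelled by taking `S⁻¹ F_γ - ⟪v, S⁻¹ F_γ⟫ h` on `Γ`; the smallness of `h` keeps these
corrected vectors nonzero.
-/

open scoped lp

namespace IsFrame

variable {H ι : Type*} [NormedAddCommGroup H] [InnerProductSpace ℂ H] {F : ι → H}

theorem eq_zero_of_tsum_eq_zero (hF : IsFrame F) {x : H} (h : ∑' i, ‖⟪F i, x⟫‖ ^ 2 = 0) :
    x = 0 := by
  obtain ⟨A, B, hA, -, hfr⟩ := hF
  have hx := (hfr x).1
  rw [h] at hx
  exact norm_eq_zero.mp (pow_eq_zero_iff two_ne_zero |>.mp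
    (le_antisymm (nonpos_of_mul_nonpos_right hx hA) (by positivity)))

theorem summable_norm_inner_sq (hF : IsFrame F) (x : H) :
    Summable fun i => ‖⟪F i, x⟫‖ ^ 2 := by
  -- `IsFrame` is stated with `tsum`, which is `0` off summability; the lower bound excludes that.
  by_contra hns
  have hx := hF.eq_zero_of_tsum_eq_zero (tsum_eq_zero_of_not_summable hns)
  exact hns (by simp [hx, summable_zero])

theorem exists_ne_zero [Nontrivial H] (hF : IsFrame F) : ∃ i, F i ≠ 0 := by
  obtain ⟨x, hx⟩ := exists_ne (0 : H)
  by_contra! h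
  exact hx (hF.eq_zero_of_tsum_eq_zero (by simp [h]))

def analysisₗ (hF : IsFrame F) : H →ₗ[ℂ] ℓ²(ι, ℂ) where
  toFun x := ⟨fun i => ⟪F i, x⟫, (memℓp_gen_iff (by norm_num)).2 (by
    simpa using hF.summable_norm_inner_sq x)⟩
  map_add' x y := by ext i; exact inner_add_right _ _ _
  map_smul' c x := by ext i; exact inner_smul_right _ _ _

@[simp]
theorem analysisₗ_apply (hF : IsFrame F) (x : H) (i : ι) : hF.analysisₗ x i = ⟪F i, x⟫ := rfl

theorem norm_analysisₗ_sq (hF : IsFrame F) (x : H) :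
    ‖hF.analysisₗ x‖ ^ 2 = ∑' i, ‖⟪F i, x⟫‖ ^ 2 := by
  simpa using lp.norm_rpow_eq_tsum (p := 2) (by norm_num) (hF.analysisₗ x)

theorem exists_norm_analysisₗ_le (hF : IsFrame F) : ∃ C, ∀ x, ‖hF.analysisₗ x‖ ≤ C * ‖x‖ := by
  obtain ⟨A, B, -, hB, hfr⟩ := id hF
  refine ⟨√B, fun x => le_of_sq_le_sq ?_ (by positivity)⟩
  rw [norm_analysisₗ_sq, mul_pow, Real.sq_sqrt hB.le]
  exact (hfr x).2

def analysis (hF : IsFrame F) : H →L[ℂ] ℓ²(ι, ℂ) :=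
  hF.analysisₗ.mkContinuousOfExistsBound hF.exists_norm_analysisₗ_le

@[simp]
theorem analysis_apply (hF : IsFrame F) (x : H) (i : ι) : hF.analysis x i = ⟪F i, x⟫ := rfl

variable [CompleteSpace H]

/-- The frame operator `S = T† T`, i.e. `S x = ∑ i, ⟪F i, x⟫ • F i`. -/
def frameOperator (hF : IsFrame F) : H →L[ℂ] H :=
  (ContinuousLinearMap.adjoint hF.analysis).comp hF.analysis

theorem adjoint_analysis_single [DecidableEq ι] (hF : IsFrame F) (i : ι) (c : ℂ) :
    ContinuousLinearMap.adjoint hF.analysis (lp.single 2 i c) = c • F i := by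
  refine ext_inner_right ℂ fun x => ?_
  rw [ContinuousLinearMap.adjoint_inner_left, lp.inner_single_left, analysis_apply, inner_smul_left]
  simp [mul_comm]

theorem hasSum_frameOperator (hF : IsFrame F) (x : H) :
    HasSum (fun i => ⟪F i, x⟫ • F i) (hF.frameOperator x) := by
  classical
  simpa [frameOperator, adjoint_analysis_single] using
    (lp.hasSum_single (by norm_num) (hF.analysis x)).mapL (ContinuousLinearMap.adjoint hF.analysis)

theorem isUnit_frameOperator (hF : IsFrame F) : IsUnit hF.frameOperator := by
  obtain ⟨A, B, hA, -, hfr⟩ := id hF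
  refine CStarAlgebra.isUnit_of_le (algebraMap ℝ (H →L[ℂ] H) A) ?_
  rw [ContinuousLinearMap.le_def, ContinuousLinearMap.isPositive_def']
  refine ⟨?_, fun x => ?_⟩
  · exact (ContinuousLinearMap.isPositive_adjoint_comp_self _).isSelfAdjoint.sub
      (IsSelfAdjoint.algebraMap _ (.all A))
  · have hS : RCLike.re ⟪hF.frameOperator x, x⟫ = ∑' i, ‖⟪F i, x⟫‖ ^ 2 := by
      rw [frameOperator, ContinuousLinearMap.comp_apply, ContinuousLinearMap.adjoint_inner_left,
        inner_self_eq_norm_sq, ← hF.norm_analysisₗ_sq]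
      rfl
    have hAx : RCLike.re ⟪A • x, x⟫ = A * ‖x‖ ^ 2 := by
      rw [RCLike.real_smul_eq_coe_smul (K := ℂ), inner_smul_real_left, RCLike.smul_re,
        inner_self_eq_norm_sq]
    simp only [ContinuousLinearMap.reApplyInnerSelf, sub_apply,
      inner_sub_left, map_sub, sub_nonneg]
    exact (hAx.trans_le (hfr x).1).trans hS.ge

/-- The canonical dual `u i = S⁻¹ (F i)` works. -/
theorem exists_dual (hF : IsFrame F) :
    ∃ u : ι → H, (∀ f, HasSum (fun i => ⟪u i, f⟫ • F i) f) ∧ ∀ i, F i ≠ 0 → u i ≠ 0 := by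
  have hsurj := (ContinuousLinearMap.isUnit_iff_bijective.mp hF.isUnit_frameOperator).surjective
  choose u hu using fun i => hsurj (F i)
  have hsa : IsSelfAdjoint hF.frameOperator :=
    (ContinuousLinearMap.isPositive_adjoint_comp_self _).isSelfAdjoint
  refine ⟨u, fun f => ?_, fun i hi hui => hi (by rw [← hu i, hui, map_zero])⟩
  obtain ⟨x, rfl⟩ := hsurj f
  convert hF.hasSum_frameOperator x using 3 with i
  rw [← hsa.adjoint_eq, ContinuousLinearMap.adjoint_inner_right, hu]

end IsFrame

theorem sub_conj_inner_smul_ne_zero {H : Type*} [NormedAddCommGroup H] [InnerProductSpace ℂ H]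
    {x v h : H} (hx : x ≠ 0) (hvh : ‖v‖ * ‖h‖ < 1) : x - starRingEnd ℂ ⟪x, v⟫ • h ≠ 0 := by
  rw [Ne, sub_eq_zero]
  intro hxh
  have hx : 0 < ‖x‖ := norm_pos_iff.mpr hx
  have : ‖x‖ < ‖x‖ := calc
    ‖x‖ = ‖⟪x, v⟫‖ * ‖h‖ := by nth_rw 1 [hxh]; rw [norm_smul, RCLike.norm_conj]
    _ ≤ ‖x‖ * ‖v‖ * ‖h‖ := by gcongr; exact norm_inner_le_norm x v
    _ < ‖x‖ := by rw [mul_assoc]; exact mul_lt_of_lt_one_right hx hvh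
  exact this.false

theorem exists_dual_union {H α : Type*} [NormedAddCommGroup H] [InnerProductSpace ℂ H]
    [Nontrivial H] (F : α → H) {s t : Set α} (hst : Disjoint s t) {u : s → H}
    (hu : ∀ f, HasSum (fun i : s => ⟪u i, f⟫ • F i) f) (hu0 : ∀ i, u i ≠ 0)
    {c : α → ℂ} (hc : ∀ q ∈ t, c q ≠ 0) (hcF : Summable fun q : t => c q • F q) :
    ∃ w : α → H, (∀ q ∈ s ∪ t, w q ≠ 0) ∧
      ∀ f, HasSum (fun q : ↥(s ∪ t) => ⟪w q, f⟫ • F q) f := by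
  classical
  set v := ∑' q : t, c q • F q
  obtain ⟨h, hh⟩ := exists_norm_eq H (inv_pos.mpr (by positivity : 0 < ‖v‖ + 1)).le
  have hvh : ‖v‖ * ‖h‖ < 1 := by
    rw [hh, ← div_eq_mul_inv, div_lt_one (by positivity)]
    linarith
  have h0 : h ≠ 0 := norm_ne_zero_iff.mp (by rw [hh]; positivity)
  -- On `s` the dual vectors are corrected by a rank-one term cancelling the `t`-part `⟪h, f⟫ • v`.
  let w : α → H := fun q =>
    if hq : q ∈ s then u ⟨q, hq⟩ - starRingEnd ℂ ⟪u ⟨q, hq⟩, v⟫ • h else starRingEnd ℂ (c q) • h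
  refine ⟨w, ?_, fun f => ?_⟩
  · rintro q (hq | hq)
    · simp only [w, dif_pos hq]
      exact sub_conj_inner_smul_ne_zero (hu0 _) hvh
    · simp only [w, dif_neg (Set.disjoint_right.mp hst hq)]
      exact smul_ne_zero (by simpa using hc q hq) h0
  · let g := fun q => ⟪w q, f⟫ • F q
    have hs : HasSum (g ∘ (↑) : s → H) (f - ⟪h, f⟫ • v) := by
      convert hu (f - ⟪h, f⟫ • v) using 3 with q
      simp [g, w]
    have ht : HasSum (g ∘ (↑) : t → H) (⟪h, f⟫ • v) := by
      convert hcF.hasSum.const_smul ⟪h, f⟫ using 2 with q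
      simp [g, w, Set.disjoint_right.mp hst q.2, smul_smul]
    have hst := hs.add_disjoint hst ht
    rwa [sub_add_cancel] at hst

theorem norm_modTrans_apply {d : ℕ} (ψ : Euc d → ℂ) (a b x : Euc d) :
    ‖modTrans ψ a b x‖ = ‖ψ (x - a)‖ := by
  simp [modTrans, Complex.norm_exp]

theorem eLpNorm_modTrans {d : ℕ} {ψ : Euc d → ℂ} (hψ : AEStronglyMeasurable ψ volume)
    (p : ℝ≥0∞) (a b : Euc d) : eLpNorm (modTrans ψ a b) p volume = eLpNorm ψ p volume := by
  rw [eLpNorm_congr_norm_ae (.of_forall (norm_modTrans_apply ψ a b))]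
  exact eLpNorm_comp_measurePreserving hψ (measurePreserving_sub_right volume a)

theorem memLp_modTrans {d : ℕ} {p : ℝ≥0∞} (φ : Lp ℂ p (volume : Measure (Euc d))) (a b : Euc d) :
    MemLp (modTrans φ a b) p volume := by
  refine ⟨?_, by rw [eLpNorm_modTrans (Lp.aestronglyMeasurable φ)]; exact Lp.eLpNorm_lt_top φ⟩
  exact (Continuous.aestronglyMeasurable (by fun_prop)).mul
    ((Lp.aestronglyMeasurable φ).comp_measurePreserving (measurePreserving_sub_right volume a))

/-- `M_b T_a φ ∈ L²(ℝ^d)` for `q = (a, b)`. -/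
def gaborAtom {d : ℕ} (φ : Lp ℂ 2 (volume : Measure (Euc d))) (q : Euc d × Euc d) :
    Lp ℂ 2 (volume : Measure (Euc d)) :=
  (memLp_modTrans φ q.1 q.2).toLp _

theorem coeFn_gaborAtom {d : ℕ} (φ : Lp ℂ 2 (volume : Measure (Euc d))) (q : Euc d × Euc d) :
    gaborAtom φ q =ᵐ[volume] modTrans φ q.1 q.2 :=
  MemLp.coeFn_toLp _

theorem norm_gaborAtom {d : ℕ} (φ : Lp ℂ 2 (volume : Measure (Euc d))) (q : Euc d × Euc d) :
    ‖gaborAtom φ q‖ = ‖φ‖ := by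
  rw [gaborAtom, Lp.norm_toLp, eLpNorm_modTrans (Lp.aestronglyMeasurable φ), Lp.norm_def]

theorem MeasureTheory.Lp.nontrivial_of_measure_ne_zero {α E : Type*} [MeasurableSpace α]
    [NormedAddCommGroup E] [Nontrivial E] {p : ℝ≥0∞} (hp0 : p ≠ 0) (hp : p ≠ ∞) {μ : Measure α} {s : Set α}
    (hs : MeasurableSet s) (h0 : μ s ≠ 0) (hfin : μ s ≠ ∞) : Nontrivial (Lp E p μ) := by
  obtain ⟨c, hc⟩ := exists_ne (0 : E)
  refine nontrivial_of_ne (indicatorConstLp p hs hfin c) 0 fun h => ?_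
  have := norm_indicatorConstLp (hs := hs) (hμs := hfin) (c := c) hp0 hp
  simp [h, hc, measureReal_def, Real.rpow_eq_zero_iff_of_nonneg, ENNReal.toReal_eq_zero_iff, h0,
    hfin] at this

theorem isOpen_ball2 {d : ℕ} (z : Euc d × Euc d) (r : ℝ) : IsOpen (ball2 z r) :=
  isOpen_lt (by fun_prop) continuous_const

theorem ball2_mono {d : ℕ} (z : Euc d × Euc d) {r r' : ℝ} (h : r ≤ r') :
    ball2 z r ⊆ ball2 z r' :=
  fun _ hq => lt_of_lt_of_le hq h

theorem ball2_subset_ball {d : ℕ} (z : Euc d × Euc d) (r : ℝ) : ball2 z r ⊆ Metric.ball z r := by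
  intro q hq
  rw [Metric.mem_ball, Prod.dist_eq]
  refine lt_of_le_of_lt (max_le ?_ ?_) hq <;> apply Real.le_sqrt_of_sq_le <;>
    nlinarith [sq_nonneg (dist q.1 z.1), sq_nonneg (dist q.2 z.2)]

theorem volume_ball2_ne_top {d : ℕ} (z : Euc d × Euc d) (r : ℝ) : volume (ball2 z r) ≠ ∞ :=
  (measure_mono (ball2_subset_ball z r)).trans_lt measure_ball_lt_top |>.ne

theorem upperBeurlingDensity2d_eq_top {d : ℕ} {Λ : Set (Euc d × Euc d)} {z : Euc d × Euc d}
    {r₀ : ℝ} (h : (Λ ∩ ball2 z r₀).Infinite) : upperBeurlingDensity2d Λ = ∞ := by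
  have hr : ∀ r ≥ r₀, ⨆ z, setCount (Λ ∩ ball2 z r) / volume (ball2 z r) = ∞ := by
    intro r hr
    refine eq_top_iff.mpr (le_iSup_of_le z ?_)
    have : Infinite ↥(Λ ∩ ball2 z r) :=
      (h.mono (Set.inter_subset_inter_right _ (ball2_mono z hr))).to_subtype
    rw [setCount, ENNReal.tsum_const_eq_top_of_ne_zero one_ne_zero,
      ENNReal.top_div_of_ne_top (volume_ball2_ne_top z r)]
  rw [upperBeurlingDensity2d, Filter.limsup_congr (Filter.eventually_atTop.mpr ⟨r₀, hr⟩),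
    Filter.limsup_const]

theorem IsOpen.exists_countable_infinite_subset_diff {E : Type*} [AddCommGroup E] [Module ℝ E]
    [Nontrivial E] [TopologicalSpace E] [ContinuousAdd E] [ContinuousSMul ℝ E] {U Γ : Set E}
    (hU : IsOpen U) (hne : U.Nonempty) (hΓ : Γ.Countable) :
    ∃ R ⊆ U, R.Countable ∧ R.Infinite ∧ Disjoint Γ R := by
  have hinf : (U \ Γ).Infinite := fun hfin =>
    ((Cardinal.le_aleph0_iff_set_countable.mpr ((hfin.countable.union hΓ).mono
      (Set.subset_sdiff_union U Γ))).trans_lt Cardinal.aleph0_lt_continuum).not_ge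
      (continuum_le_cardinal_of_isOpen ℝ hU hne)
  refine ⟨Set.range fun n => (hinf.natEmbedding _ n : E), ?_, Set.countable_range _,
    Set.infinite_range_of_injective
      (Subtype.val_injective.comp (hinf.natEmbedding _).injective), ?_⟩
  · rintro _ ⟨n, rfl⟩
    exact (hinf.natEmbedding _ n).2.1
  · rw [Set.disjoint_right]
    rintro _ ⟨n, rfl⟩
    exact (hinf.natEmbedding _ n).2.2

/-- If some Gabor system `{M_b T_a φ : (a,b) ∈ Γ}` is a frame for `L²(ℝ^d)`, then there are a
countable set `Λ ⊆ ℝ^{2d}` with infinite upper Beurling density and nonzero coefficient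
functionals `(g_λ)` making `{M_b T_a φ : (a,b) ∈ Λ}` an unconditional Schauder frame. -/
theorem stmt12 {d : ℕ} (hd : 0 < d)
    (φ : Lp ℂ 2 (volume : Measure (Euc d)))
    (Γ : Set (Euc d × Euc d)) (hΓ : Γ.Countable)
    (Gf : Γ → Lp ℂ 2 (volume : Measure (Euc d)))
    (hGf : ∀ p : Γ, (Gf p : Euc d → ℂ) =ᵐ[volume]
      modTrans (φ : Euc d → ℂ) (p : Euc d × Euc d).1 (p : Euc d × Euc d).2)
    (hframe : IsFrame Gf) :
    ∃ Λ : Set (Euc d × Euc d), Λ.Countable ∧ upperBeurlingDensity2d Λ = ∞ ∧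
      ∃ (G : Λ → Lp ℂ 2 (volume : Measure (Euc d)))
        (g : Λ → Lp ℂ 2 (volume : Measure (Euc d))),
        (∀ p : Λ, (G p : Euc d → ℂ) =ᵐ[volume]
          modTrans (φ : Euc d → ℂ) (p : Euc d × Euc d).1 (p : Euc d × Euc d).2) ∧
        (∀ p : Λ, g p ≠ 0) ∧
        ∀ f : Lp ℂ 2 (volume : Measure (Euc d)),
          HasSum (fun p : Λ => ⟪g p, f⟫ • G p) f := by
  have : NeZero d := ⟨hd.ne'⟩
  have : Nontrivial (Lp ℂ 2 (volume : Measure (Euc d))) :=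
    Lp.nontrivial_of_measure_ne_zero two_ne_zero ENNReal.ofNat_ne_top measurableSet_ball
      (Metric.measure_ball_pos volume (0 : Euc d) one_pos).ne' measure_ball_lt_top.ne
  have hGf_eq : ∀ p, Gf p = gaborAtom φ p :=
    fun p => Lp.ext ((hGf p).trans (coeFn_gaborAtom φ p).symm)
  have hGf0 : ∀ p, Gf p ≠ 0 := by
    obtain ⟨i, hi⟩ := hframe.exists_ne_zero
    intro p
    rw [← norm_ne_zero_iff, hGf_eq, norm_gaborAtom] at hi ⊢
    exact hi
  obtain ⟨u, hu, hu0⟩ := hframe.exists_dual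
  obtain ⟨R, hRball, hR, hRinf, hΓR⟩ :=
    (isOpen_ball2 (0 : Euc d × Euc d) 1).exists_countable_infinite_subset_diff
      ⟨0, by simp [ball2]⟩ hΓ
  obtain ⟨ε, hε, _, hεsum, -⟩ := hR.exists_pos_hasSum_le one_pos
  have hεG : Summable fun q : R => ((ε q : ℝ) : ℂ) • gaborAtom φ q :=
    .of_norm_bounded (hεsum.summable.mul_right ‖φ‖) fun q => by
      rw [norm_smul, norm_gaborAtom, Complex.norm_real, Real.norm_of_nonneg (hε q).le]
  obtain ⟨w, hw0, hw⟩ := exists_dual_union (gaborAtom φ) hΓR (by simpa only [hGf_eq] using hu)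
    (fun i => hu0 i (hGf0 i)) (fun q _ => Complex.ofReal_ne_zero.mpr (hε q).ne') hεG
  exact ⟨Γ ∪ R, hΓ.union hR,
    upperBeurlingDensity2d_eq_top (hRinf.mono (Set.subset_inter Set.subset_union_right hRball)),
    fun p => gaborAtom φ p, fun p => w p, fun p => coeFn_gaborAtom φ p, fun p => hw0 p p.2, hw⟩
end
end

section
/- Let H be an infinite-dimensional separable complex Hilbert space. There exist a bounded normal operator A : H → H, a vector x ∈ H, and an infinite set Γ ⊆ ℕ ∪ {0} such that Aⁿx ≠ 0 for all n ∈ Γ and the family (Aⁿx/‖Aⁿx‖)_{n∈Γ} is a frame for H. -/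
open scoped ComplexInnerProductSpace

noncomputable section

/-!
Fix a Hilbert basis `(b k)` indexed by `ℕ`, let `A` be the diagonal operator `A (b k) = λₖ b k`
with `λₖ = exp (-4⁻ᵏ)`, and let `x` have coordinates `exp (-2·8ᵏ)`. Then `Aⁿx` has coordinates
`exp (-(2·8ʲ + n/4ʲ))`, and at the time `Nₖ = 2·32ᵏ` the `k`-th coordinate exceeds the `j`-th one
by a factor at least `exp (j + k + 2)`. Hence the normalised vector `A^Nₖ x / ‖A^Nₖ x‖` lies within
squared distance `4⁻ᵏ/6` of `b k`, and a family whose squared distances to an orthonormal basis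
sum to less than `1/2` is a frame.
-/

section Frame

variable {H : Type*} [NormedAddCommGroup H] [InnerProductSpace ℂ H]

theorem IsFrame.of_comp_equiv {ι ι' : Type*} {f : ι → H} (e : ι' ≃ ι) (h : IsFrame (f ∘ e)) :
    IsFrame f := by
  obtain ⟨A, B, hA, hB, hAB⟩ := h
  refine ⟨A, B, hA, hB, fun x => ?_⟩
  simpa only [Function.comp_apply, e.tsum_eq fun i => ‖⟪f i, x⟫‖ ^ 2] using hAB x

theorem HilbertBasis.hasSum_norm_inner_sq {ι 𝕜 E : Type*} [RCLike 𝕜] [NormedAddCommGroup E]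
    [InnerProductSpace 𝕜 E] (b : HilbertBasis ι 𝕜 E) (x : E) :
    HasSum (fun i => ‖inner 𝕜 (b i) x‖ ^ 2) (‖x‖ ^ 2) := by
  simpa [b.repr_apply_apply] using lp.hasSum_norm (p := 2) (by norm_num) (b.repr x)

theorem norm_add_sq_le_two_mul {E : Type*} [SeminormedAddCommGroup E] (a b : E) :
    ‖a + b‖ ^ 2 ≤ 2 * ‖a‖ ^ 2 + 2 * ‖b‖ ^ 2 := by
  nlinarith [norm_add_le a b, norm_nonneg (a + b), add_sq_le (a := ‖a‖) (b := ‖b‖)]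

theorem isFrame_of_summable_norm_sub_sq_lt {ι : Type*} (g : HilbertBasis ι ℂ H) {u : ι → H}
    (hs : Summable fun i => ‖u i - g i‖ ^ 2) (hlt : ∑' i, ‖u i - g i‖ ^ 2 < 1 / 2) :
    IsFrame u := by
  set δ := ∑' i, ‖u i - g i‖ ^ 2
  have hδ : 0 ≤ δ := tsum_nonneg fun i => by positivity
  refine ⟨1 / 2 - δ, 2 + 2 * δ, by linarith, by linarith, fun z => ?_⟩
  have hg := g.hasSum_norm_inner_sq z
  have hd := hs.hasSum.mul_right (‖z‖ ^ 2)
  have hsplit (i : ι) : ⟪u i, z⟫ = ⟪g i, z⟫ + ⟪u i - g i, z⟫ := by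
    rw [inner_sub_left]; ring
  have hpert (i : ι) : ‖⟪u i - g i, z⟫‖ ^ 2 ≤ ‖u i - g i‖ ^ 2 * ‖z‖ ^ 2 := by
    rw [← mul_pow]; gcongr; exact norm_inner_le_norm _ _
  have hupper (i : ι) :
      ‖⟪u i, z⟫‖ ^ 2 ≤ 2 * ‖⟪g i, z⟫‖ ^ 2 + 2 * (‖u i - g i‖ ^ 2 * ‖z‖ ^ 2) := by
    rw [hsplit]; linarith [norm_add_sq_le_two_mul ⟪g i, z⟫ ⟪u i - g i, z⟫, hpert i]
  have hlower (i : ι) :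
      ‖⟪g i, z⟫‖ ^ 2 / 2 - ‖u i - g i‖ ^ 2 * ‖z‖ ^ 2 ≤ ‖⟪u i, z⟫‖ ^ 2 := by
    have := norm_add_sq_le_two_mul ⟪u i, z⟫ (-⟪u i - g i, z⟫)
    rw [norm_neg, hsplit i, add_neg_cancel_right, ← hsplit i] at this
    linarith [hpert i]
  have hsum : Summable fun i => ‖⟪u i, z⟫‖ ^ 2 :=
    .of_nonneg_of_le (fun i => by positivity) hupper
      ((hg.mul_left 2).add (hd.mul_left 2)).summable
  constructor
  · have := hasSum_le hlower ((hg.div_const 2).sub hd) hsum.hasSum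
    linarith
  · have := hasSum_le hupper hsum.hasSum ((hg.mul_left 2).add (hd.mul_left 2))
    linarith

theorem norm_inv_norm_smul_sub_sq_le {g v : H} (hg : ‖g‖ = 1) {t : ℝ} (ht : 0 ≤ t)
    (hre : 0 < (⟪g, v⟫).re) (hv : ‖v‖ ^ 2 ≤ (1 + t) * (⟪g, v⟫).re ^ 2) :
    ‖(‖v‖ : ℂ)⁻¹ • v - g‖ ^ 2 ≤ 2 * t := by
  set r := (⟪g, v⟫).re
  have hv0 : 0 < ‖v‖ := by
    refine norm_pos_iff.2 fun h => ?_
    simp [r, h] at hre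
  have hu : ‖(‖v‖ : ℂ)⁻¹ • v‖ = 1 := by
    rw [norm_smul, norm_inv, Complex.norm_real, norm_norm, inv_mul_cancel₀ hv0.ne']
  have hre_u : (⟪(‖v‖ : ℂ)⁻¹ • v, g⟫).re = r / ‖v‖ := by
    rw [inner_smul_left, ← inner_conj_symm, ← Complex.ofReal_inv, Complex.conj_ofReal,
      Complex.re_ofReal_mul, Complex.conj_re, div_eq_inv_mul]
  rw [@norm_sub_sq ℂ, hu, hg, RCLike.re_to_complex, hre_u]
  -- `r ≥ (1 - t) ‖v‖` because `(1 - t)² (1 + t) ≤ 1`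
  have key : (1 - t) * ‖v‖ ≤ r := by
    rcases le_or_gt 1 t with h1 | h1
    · nlinarith
    · nlinarith [mul_le_mul_of_nonneg_left hv (sq_nonneg (1 - t)), sq_nonneg t,
        mul_nonneg ht (sq_nonneg r), mul_nonneg (mul_nonneg ht ht) (sq_nonneg r)]
  have : 1 - t ≤ r / ‖v‖ := by rwa [le_div_iff₀ hv0]
  linarith

end Frame

section HilbertBasis

variable {ι 𝕜 E : Type*} [RCLike 𝕜] [NormedAddCommGroup E] [InnerProductSpace 𝕜 E]

theorem Orthonormal.countable [TopologicalSpace.SeparableSpace E] {v : ι → E}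
    (hv : Orthonormal 𝕜 v) : Countable ι := by
  refine Pairwise.countable_of_isOpen_disjoint (s := fun i => Metric.ball (v i) 2⁻¹)
    (fun i j hij => Metric.ball_disjoint_ball ?_) (fun _ => Metric.isOpen_ball)
    (fun _ => Metric.nonempty_ball.2 (by norm_num))
  have : dist (v i) (v j) ^ 2 = 2 := by
    rw [dist_eq_norm, @norm_sub_sq 𝕜, hv.1 i, hv.1 j, hv.2 hij]
    norm_num
  nlinarith [dist_nonneg (x := v i) (y := v j)]

theorem HilbertBasis.finiteDimensional [Finite ι] (b : HilbertBasis ι 𝕜 E) :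
    FiniteDimensional 𝕜 E := by
  cases nonempty_fintype ι
  exact .of_basis b.toOrthonormalBasis.toBasis

theorem exists_hilbertBasis_nat [CompleteSpace E] [TopologicalSpace.SeparableSpace E]
    (h : ¬ FiniteDimensional 𝕜 E) : Nonempty (HilbertBasis ℕ 𝕜 E) := by
  obtain ⟨w, b, -⟩ := exists_hilbertBasis 𝕜 E
  have : Countable w := b.orthonormal.countable
  have : Infinite w := not_finite_iff_infinite.1 fun _ => h b.finiteDimensional
  obtain ⟨_⟩ := nonempty_denumerable w
  let e : ℕ ≃ w := (Denumerable.eqv w).symm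
  refine ⟨HilbertBasis.mk (b.orthonormal.comp e e.injective) ?_⟩
  rw [Set.range_comp, e.range_eq_univ, Set.image_univ, b.dense_span]

end HilbertBasis

theorem RCLike.norm_ofReal_mul_le {𝕜 : Type*} [RCLike 𝕜] {μ : ℝ} (hμ : |μ| ≤ 1) (a : 𝕜) :
    ‖(μ : 𝕜) * a‖ ≤ ‖a‖ := by
  rw [norm_mul, RCLike.norm_ofReal]
  exact mul_le_of_le_one_left (norm_nonneg a) hμ

namespace lp

variable {ι 𝕜 : Type*} [RCLike 𝕜]

def diagonal (μ : ι → ℝ) (hμ : ∀ i, |μ i| ≤ 1) : ℓ²(ι, 𝕜) →L[𝕜] ℓ²(ι, 𝕜) :=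
  LinearMap.mkContinuous
    { toFun := fun f => ⟨fun i => (μ i : 𝕜) * f i,
        (lp.memℓp f).mono' fun i => RCLike.norm_ofReal_mul_le (hμ i) (f i)⟩
      map_add' := fun f g => by ext i; simp only [lp.coeFn_add, Pi.add_apply, mul_add]
      map_smul' := fun c f => by ext i; simp [mul_left_comm] }
    1 fun f => by
      rw [one_mul]
      exact lp.norm_mono two_ne_zero fun i => RCLike.norm_ofReal_mul_le (hμ i) (f i)

variable (μ : ι → ℝ) (hμ : ∀ i, |μ i| ≤ 1)

@[simp]
theorem diagonal_apply (f : ℓ²(ι, 𝕜)) (i : ι) : diagonal μ hμ f i = (μ i : 𝕜) * f i := rfl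

theorem diagonal_pow_apply (n : ℕ) (f : ℓ²(ι, 𝕜)) (i : ι) :
    (diagonal (𝕜 := 𝕜) μ hμ ^ n) f i = (μ i : 𝕜) ^ n * f i := by
  induction n with
  | zero => simp
  | succ n ih => rw [pow_succ', mul_apply_eq_comp, diagonal_apply, ih, pow_succ']; ring

theorem inner_diagonal_left (f g : ℓ²(ι, 𝕜)) :
    inner 𝕜 (diagonal μ hμ f) g = inner 𝕜 f (diagonal μ hμ g) := by
  simp only [lp.inner_eq_tsum, diagonal_apply, RCLike.inner_apply, map_mul, RCLike.conj_ofReal]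
  congr 1 with i
  ring

end lp

namespace HilbertBasis

variable {ι 𝕜 E : Type*} [RCLike 𝕜] [NormedAddCommGroup E] [InnerProductSpace 𝕜 E]

def diagonal (b : HilbertBasis ι 𝕜 E) (μ : ι → ℝ) (hμ : ∀ i, |μ i| ≤ 1) : E →L[𝕜] E :=
  b.repr.symm.toContinuousLinearEquiv.conjContinuousAlgEquiv (lp.diagonal μ hμ)

variable (b : HilbertBasis ι 𝕜 E) (μ : ι → ℝ) (hμ : ∀ i, |μ i| ≤ 1)

theorem repr_diagonal_pow_apply (n : ℕ) (x : E) :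
    b.repr ((b.diagonal μ hμ ^ n) x) = (lp.diagonal (𝕜 := 𝕜) μ hμ ^ n) (b.repr x) := by
  rw [diagonal, ← map_pow, ContinuousLinearEquiv.conjContinuousAlgEquiv_apply_apply]
  exact b.repr.apply_symm_apply _

theorem inner_diagonal_pow_apply (n : ℕ) (x : E) (i : ι) :
    inner 𝕜 (b i) ((b.diagonal μ hμ ^ n) x) = (μ i : 𝕜) ^ n * inner 𝕜 (b i) x := by
  simp only [← b.repr_apply_apply, repr_diagonal_pow_apply, lp.diagonal_pow_apply]

theorem isSelfAdjoint_diagonal [CompleteSpace E] : IsSelfAdjoint (b.diagonal μ hμ) := by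
  refine ContinuousLinearMap.isSelfAdjoint_iff_isSymmetric.2 fun x y => ?_
  have h := repr_diagonal_pow_apply b μ hμ 1
  simp only [pow_one] at h
  rw [ContinuousLinearMap.coe_coe, ← b.repr.inner_map_map, h, lp.inner_diagonal_left, ← h,
    b.repr.inner_map_map]

end HilbertBasis

namespace OrbitFrame

def exponent (k n : ℕ) : ℝ := 2 * 8 ^ k + n / 4 ^ k

def sampleTime (k : ℕ) : ℕ := 2 * 32 ^ k

theorem sampleTime_strictMono : StrictMono sampleTime := fun _ _ h => by
  unfold sampleTime; gcongr; norm_num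

theorem exponent_sampleTime_self (k : ℕ) : exponent k (sampleTime k) = 4 * 8 ^ k := by
  rw [exponent, sampleTime]
  push_cast
  rw [show (32 : ℝ) = 8 * 4 by norm_num, mul_pow]
  field_simp
  ring

theorem exponent_sampleTime_gap_nat {j k : ℕ} (h : j ≠ k) :
    (4 * 8 ^ k + j + k + 2) * 4 ^ j ≤ 2 * 32 ^ j + 2 * 32 ^ k := by
  have h32 (m : ℕ) : 32 ^ m = 8 ^ m * 4 ^ m := by rw [← mul_pow]; rfl
  rcases h.lt_or_gt with hjk | hkj
  · have h4 : 4 ^ j * 4 ≤ 4 ^ k := by rw [← pow_succ]; exact Nat.pow_le_pow_right (by norm_num) hjk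
    have h8 : k < 8 ^ k := Nat.lt_pow_self (by norm_num)
    calc (4 * 8 ^ k + j + k + 2) * 4 ^ j ≤ 8 * 8 ^ k * 4 ^ j := Nat.mul_le_mul_right _ (by omega)
      _ = 2 * 8 ^ k * (4 ^ j * 4) := by ring
      _ ≤ 2 * 8 ^ k * 4 ^ k := Nat.mul_le_mul_left _ h4
      _ ≤ 2 * 32 ^ j + 2 * 32 ^ k := by rw [h32 k, mul_assoc]; omega
  · have h8 : 8 ^ k * 8 ≤ 8 ^ j := by rw [← pow_succ]; exact Nat.pow_le_pow_right (by norm_num) hkj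
    have h8j : (j + 1) * 4 ≤ 8 ^ j := by
      rw [show 8 ^ j = 2 ^ j * 4 ^ j by rw [← mul_pow]; rfl]
      exact Nat.mul_le_mul Nat.lt_two_pow_self (Nat.le_self_pow (by omega) 4)
    calc (4 * 8 ^ k + j + k + 2) * 4 ^ j ≤ 2 * 8 ^ j * 4 ^ j :=
          Nat.mul_le_mul_right _ (by omega)
      _ ≤ 2 * 32 ^ j + 2 * 32 ^ k := by rw [h32 j, mul_assoc]; omega

theorem exponent_sampleTime_gap {j k : ℕ} (h : j ≠ k) :
    exponent k (sampleTime k) + (j + k + 2) ≤ exponent j (sampleTime k) := by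
  rw [exponent_sampleTime_self, exponent, ← sub_nonneg]
  have key : ((4 * 8 ^ k + j + k + 2) * 4 ^ j : ℝ) ≤ 2 * 32 ^ j + 2 * 32 ^ k := by
    exact_mod_cast exponent_sampleTime_gap_nat h
  have : (2 * 8 ^ j + (sampleTime k : ℝ) / 4 ^ j - (4 * 8 ^ k + (j + k + 2))) * 4 ^ j
      = 2 * 32 ^ j + 2 * 32 ^ k - (4 * 8 ^ k + j + k + 2) * 4 ^ j := by
    rw [sampleTime, show (32 : ℝ) = 8 * 4 by norm_num, mul_pow]
    field_simp
    push_cast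
    ring
  nlinarith [pow_pos (by norm_num : (0 : ℝ) < 4) j]

theorem exp_neg_natCast_le (m : ℕ) : Real.exp (-m) ≤ (1 / 2) ^ m := by
  rw [show -(m : ℝ) = m * (-1) by ring, Real.exp_nat_mul]
  have : Real.exp (-1) ≤ 1 / 2 := by
    rw [Real.exp_neg, one_div]
    exact inv_anti₀ (by norm_num) (by linarith [Real.add_one_le_exp 1])
  exact pow_le_pow_left₀ (Real.exp_pos _).le this m

theorem exp_neg_exponent_le (j n : ℕ) : Real.exp (-exponent j n) ≤ (1 / 2) ^ j := by
  refine le_trans (Real.exp_le_exp.2 (neg_le_neg ?_)) (exp_neg_natCast_le j)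
  have : (j : ℝ) < 2 ^ j := by exact_mod_cast Nat.lt_two_pow_self
  have : (2 : ℝ) ^ j ≤ 8 ^ j := pow_le_pow_left₀ (by norm_num) (by norm_num) j
  have : (0 : ℝ) ≤ n / 4 ^ j := by positivity
  rw [exponent]; linarith

theorem exp_neg_exponent_sq_le {j k : ℕ} (h : j ≠ k) :
    Real.exp (-exponent j (sampleTime k)) ^ 2
      ≤ (1 / 4) ^ (k + 2) * (1 / 4) ^ j * Real.exp (-exponent k (sampleTime k)) ^ 2 := by
  have hgap : Real.exp (-exponent j (sampleTime k))
      ≤ Real.exp (-((j + k + 2 : ℕ) : ℝ)) * Real.exp (-exponent k (sampleTime k)) := by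
    rw [← Real.exp_add, Real.exp_le_exp]
    push_cast
    linarith [exponent_sampleTime_gap h]
  calc Real.exp (-exponent j (sampleTime k)) ^ 2
      ≤ ((1 / 2) ^ (j + k + 2) * Real.exp (-exponent k (sampleTime k))) ^ 2 := by
        gcongr
        exact hgap.trans (by gcongr; exact exp_neg_natCast_le _)
    _ = _ := by rw [mul_pow, ← pow_mul, mul_comm _ 2, pow_mul]; norm_num; ring

def eigenvalue (k : ℕ) : ℝ := Real.exp (-(4 ^ k)⁻¹)

theorem abs_eigenvalue_le_one (k : ℕ) : |eigenvalue k| ≤ 1 := by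
  rw [eigenvalue, abs_of_pos (Real.exp_pos _), Real.exp_le_one_iff, neg_nonpos]
  positivity

theorem exp_neg_exponent_zero_mul_eigenvalue_pow (j n : ℕ) :
    Real.exp (-exponent j 0) * eigenvalue j ^ n = Real.exp (-exponent j n) := by
  rw [eigenvalue, ← Real.exp_nat_mul, ← Real.exp_add, exponent, exponent]
  congr 1
  push_cast
  ring

theorem memℓp_exp_neg_exponent (n : ℕ) : Memℓp (fun j => (Real.exp (-exponent j n) : ℂ)) 2 := by
  refine memℓp_gen ?_
  refine .of_nonneg_of_le (fun j => by positivity) (fun j => ?_)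
    (summable_geometric_of_lt_one (r := 1 / 4) (by norm_num) (by norm_num))
  rw [Complex.norm_real, Real.norm_of_nonneg (Real.exp_pos _).le, ENNReal.toReal_ofNat,
    Real.rpow_two, show (1 / 4 : ℝ) ^ j = ((1 / 2) ^ j) ^ 2 by
      rw [← pow_mul, mul_comm, pow_mul]; norm_num]
  gcongr
  exact exp_neg_exponent_le j n

variable {H : Type*} [NormedAddCommGroup H] [InnerProductSpace ℂ H] (b : HilbertBasis ℕ ℂ H)

def operator : H →L[ℂ] H := b.diagonal eigenvalue abs_eigenvalue_le_one

def vector : H := b.repr.symm ⟨_, memℓp_exp_neg_exponent 0⟩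

theorem adjoint_operator [CompleteSpace H] :
    ContinuousLinearMap.adjoint (operator b) = operator b :=
  ContinuousLinearMap.isSelfAdjoint_iff'.1 (b.isSelfAdjoint_diagonal _ abs_eigenvalue_le_one)

theorem inner_operator_pow_vector (j n : ℕ) :
    ⟪b j, (operator b ^ n) (vector b)⟫ = (Real.exp (-exponent j n) : ℂ) := by
  rw [operator, HilbertBasis.inner_diagonal_pow_apply, vector, ← b.repr_apply_apply,
    b.repr.apply_symm_apply, ← exp_neg_exponent_zero_mul_eigenvalue_pow]
  push_cast
  exact mul_comm _ _

theorem operator_pow_vector_ne_zero (n : ℕ) : (operator b ^ n) (vector b) ≠ 0 := fun h => by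
  have := inner_operator_pow_vector b 0 n
  rw [h, inner_zero_right, eq_comm, Complex.ofReal_eq_zero] at this
  exact (Real.exp_pos _).ne' this

theorem norm_operator_pow_vector_sq_le (k : ℕ) :
    ‖(operator b ^ sampleTime k) (vector b)‖ ^ 2
      ≤ (1 + (1 / 4) ^ k / 12) * Real.exp (-exponent k (sampleTime k)) ^ 2 := by
  set γ := fun j => Real.exp (-exponent j (sampleTime k))
  have hparseval : HasSum (fun j => γ j ^ 2) (‖(operator b ^ sampleTime k) (vector b)‖ ^ 2) := by
    convert b.hasSum_norm_inner_sq _ using 2 with j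
    rw [inner_operator_pow_vector, Complex.norm_real, Real.norm_of_nonneg (Real.exp_pos _).le]
  have hbound : HasSum
      (fun j => (if j = k then γ k ^ 2 else 0) + (1 / 4) ^ (k + 2) * (1 / 4) ^ j * γ k ^ 2)
      ((1 + (1 / 4) ^ k / 12) * γ k ^ 2) := by
    convert (hasSum_ite_eq k (γ k ^ 2)).add
      (((hasSum_geometric_of_lt_one (r := (1 / 4 : ℝ)) (by norm_num) (by norm_num)).mul_left
        ((1 / 4) ^ (k + 2))).mul_right (γ k ^ 2)) using 1
    ring
  refine hasSum_le (fun j => ?_) hparseval hbound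
  by_cases hj : j = k
  · rw [if_pos hj, hj]
    exact le_add_of_nonneg_right (by positivity)
  · simpa [hj] using exp_neg_exponent_sq_le hj

def normalizedOrbit (k : ℕ) : H :=
  (‖(operator b ^ sampleTime k) (vector b)‖ : ℂ)⁻¹ • (operator b ^ sampleTime k) (vector b)

theorem norm_normalizedOrbit_sub_sq_le (k : ℕ) :
    ‖normalizedOrbit b k - b k‖ ^ 2 ≤ (1 / 4) ^ k / 6 := by
  have := norm_inv_norm_smul_sub_sq_le (b.orthonormal.1 k) (t := (1 / 4) ^ k / 12) (by positivity)
    (by rw [inner_operator_pow_vector b k (sampleTime k), Complex.ofReal_re]; exact Real.exp_pos _)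
    (by rw [inner_operator_pow_vector, Complex.ofReal_re]; exact norm_operator_pow_vector_sq_le b k)
  rw [normalizedOrbit]
  linarith

theorem isFrame_normalizedOrbit : IsFrame (normalizedOrbit b) := by
  have hgeom :=
    (hasSum_geometric_of_lt_one (r := (1 / 4 : ℝ)) (by norm_num) (by norm_num)).div_const 6
  have hs : Summable fun k => ‖normalizedOrbit b k - b k‖ ^ 2 :=
    .of_nonneg_of_le (fun _ => by positivity) (norm_normalizedOrbit_sub_sq_le b) hgeom.summable
  refine isFrame_of_summable_norm_sub_sq_lt b hs ?_
  calc ∑' k, ‖normalizedOrbit b k - b k‖ ^ 2 ≤ ∑' k : ℕ, (1 / 4 : ℝ) ^ k / 6 :=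
        hs.tsum_le_tsum (norm_normalizedOrbit_sub_sq_le b) hgeom.summable
    _ < 1 / 2 := by rw [hgeom.tsum_eq]; norm_num

end OrbitFrame

/-- There exist a bounded normal operator `A`, a vector `x` and an infinite set
`Γ ⊆ ℕ` such that the normalized orbit `(Aⁿx/‖Aⁿx‖)_{n ∈ Γ}` is a frame. -/
theorem stmt17 (H : Type*) [NormedAddCommGroup H] [InnerProductSpace ℂ H]
    [CompleteSpace H] [TopologicalSpace.SeparableSpace H]
    (hinf : ¬ FiniteDimensional ℂ H) :
    ∃ (A : H →L[ℂ] H) (x : H) (Γ : Set ℕ),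
      A ∘L ContinuousLinearMap.adjoint A = ContinuousLinearMap.adjoint A ∘L A ∧
      Γ.Infinite ∧ (∀ n ∈ Γ, (A ^ n) x ≠ 0) ∧
      IsFrame (fun n : Γ => (‖(A ^ (n : ℕ)) x‖ : ℂ)⁻¹ • (A ^ (n : ℕ)) x) := by
  obtain ⟨b⟩ := exists_hilbertBasis_nat (𝕜 := ℂ) hinf
  refine ⟨OrbitFrame.operator b, OrbitFrame.vector b, Set.range OrbitFrame.sampleTime,
    by rw [OrbitFrame.adjoint_operator],
    Set.infinite_range_of_injective OrbitFrame.sampleTime_strictMono.injective, ?_, ?_⟩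
  · rintro _ ⟨k, rfl⟩
    exact OrbitFrame.operator_pow_vector_ne_zero b _
  · exact (OrbitFrame.isFrame_normalizedOrbit b).of_comp_equiv
      (Equiv.ofInjective _ OrbitFrame.sampleTime_strictMono.injective)
end
end
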